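/- Let b > 0 and let u : [0,b] → ℝ be continuous with radial average ũ satisfying |u(r) − ũ(r)| ≤ L·r for all r ∈ (0,b] and some L ≥ 0. Define g(r) := exp(−∫_r^b (1/s)(u(s) − ũ(s))² ds) on [0,b] and let g̃ be the radial average of g. Then ∫_0^b g̃'(r)·(u(r)² − 2·u(r)·ũ(r)) dr ≤ 1 − g(0). -/

import Mathlib

/-!
The weight `g = exp (-∫_r^b (u - ũ)² / s ds)` solves `g' = g (u - ũ)² / r` with `g(b) = 1`, and it
is increasing, so its radial average satisfies `0 ≤ g̃' = (g - g̃) / r ≤ g / r`. Hence pointwise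
`g̃' (u² - 2uũ) ≤ g̃' (u - ũ)² ≤ g (u - ũ)² / r = g'`, and integrating gives `1 - g(0)`.
-/

open MeasureTheory intervalIntegral Set Filter Topology

theorem intervalIntegrable_of_continuousOn_Ioc_of_abs_le {f : ℝ → ℝ} {a b M : ℝ} (hab : a ≤ b)
    (hf : ContinuousOn f (Ioc a b)) (hM : ∀ x ∈ Ioc a b, |f x| ≤ M) :
    IntervalIntegrable f volume a b := by
  rw [intervalIntegrable_iff_integrableOn_Ioc_of_le hab]
  refine Integrable.mono' (g := fun _ ↦ M) (integrableOn_const measure_Ioc_lt_top.ne)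
    (hf.aestronglyMeasurable measurableSet_Ioc) ?_
  filter_upwards [ae_restrict_mem measurableSet_Ioc] with x hx
  exact (Real.norm_eq_abs _).trans_le (hM x hx)

theorem one_div_mul_sq_le {s x L : ℝ} (hs : 0 < s) (hx : |x| ≤ L * s) :
    1 / s * x ^ 2 ≤ L ^ 2 * s := by
  calc 1 / s * x ^ 2 ≤ 1 / s * (L * s) ^ 2 :=
        mul_le_mul_of_nonneg_left (sq_le_sq.2 (hx.trans (le_abs_self _))) (by positivity)
    _ = L ^ 2 * s := by field_simp

theorem mul_sq_sub_two_mul_le {d c x y : ℝ} (hd : 0 ≤ d) (hdc : d ≤ c) :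
    d * (x ^ 2 - 2 * x * y) ≤ c * (x - y) ^ 2 := by
  nlinarith [mul_nonneg hd (sq_nonneg y), mul_nonneg (sub_nonneg.2 hdc) (sq_nonneg (x - y))]

noncomputable def radialAverage (f : ℝ → ℝ) (r : ℝ) : ℝ := 1 / r * ∫ s in (0:ℝ)..r, f s

section RadialAverage

variable {f : ℝ → ℝ} {b r : ℝ}

theorem radialAverage_nonneg (hr : 0 ≤ r) (hf : ∀ s ∈ Icc 0 r, 0 ≤ f s) :
    0 ≤ radialAverage f r :=
  mul_nonneg (by positivity) (integral_nonneg hr hf)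

theorem radialAverage_le_of_monotoneOn (hr : 0 < r) (hf : MonotoneOn f (Icc 0 r)) :
    radialAverage f r ≤ f r := by
  have hint : (∫ s in (0:ℝ)..r, f s) ≤ ∫ _ in (0:ℝ)..r, f r :=
    integral_mono_on hr.le (uIcc_of_le hr.le ▸ hf).intervalIntegrable
      intervalIntegrable_const fun s hs ↦ hf hs (right_mem_Icc.2 hr.le) hs.2
  rw [radialAverage, one_div_mul_eq_div, div_le_iff₀ hr]
  simpa [mul_comm] using hint

theorem continuousOn_radialAverage (hf : IntegrableOn f (Icc 0 b)) :
    ContinuousOn (radialAverage f) (Ioc 0 b) := by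
  rcases le_total 0 b with hb | hb
  · have hprim := continuousOn_primitive_interval (a := 0) (b := b) (μ := volume)
      (by rwa [uIcc_of_le hb])
    rw [uIcc_of_le hb] at hprim
    exact (continuousOn_const.div continuousOn_id fun _ hs ↦ hs.1.ne').mul
      (hprim.mono Ioc_subset_Icc_self)
  · simp [Ioc_eq_empty_of_le hb]

theorem hasDerivAt_radialAverage (hf : ContinuousOn f (Icc 0 b)) (hr : r ∈ Ioo 0 b) :
    HasDerivAt (radialAverage f) ((f r - radialAverage f r) / r) r := by
  have hprim : HasDerivAt (fun x ↦ ∫ s in (0:ℝ)..x, f s) (f r) r :=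
    integral_hasDerivAt_right
      ((hf.mono (Icc_subset_Icc_right hr.2.le)).intervalIntegrable_of_Icc hr.1.le)
      ((hf.mono Ioo_subset_Icc_self).stronglyMeasurableAtFilter isOpen_Ioo r hr)
      (hf.continuousAt (Icc_mem_nhds hr.1 hr.2))
  have hinv : HasDerivAt (fun x : ℝ ↦ 1 / x) (-(r ^ 2)⁻¹) r := by
    simpa only [one_div] using hasDerivAt_inv hr.1.ne'
  refine (hinv.mul hprim).congr_deriv ?_
  have hr0 : r ≠ 0 := hr.1.ne'
  rw [radialAverage]
  field_simp
  ring

theorem deriv_radialAverage_mem_Icc (hf : ContinuousOn f (Icc 0 b))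
    (hmono : MonotoneOn f (Icc 0 b)) (hf0 : 0 ≤ f 0) (hr : r ∈ Ioo 0 b) :
    deriv (radialAverage f) r ∈ Icc 0 (f r / r) := by
  have hsub : Icc 0 r ⊆ Icc 0 b := Icc_subset_Icc_right hr.2.le
  rw [(hasDerivAt_radialAverage hf hr).deriv]
  refine ⟨div_nonneg (sub_nonneg.2 ?_) hr.1.le, div_le_div_of_nonneg_right ?_ hr.1.le⟩
  · exact radialAverage_le_of_monotoneOn hr.1 (hmono.mono hsub)
  · refine sub_le_self _ (radialAverage_nonneg hr.1.le fun s hs ↦ ?_)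
    exact hf0.trans (hmono (left_mem_Icc.2 (hr.1.le.trans hr.2.le)) (hsub hs) hs.1)

end RadialAverage

section ExpNegIntegral

variable {g h : ℝ → ℝ} {a b : ℝ}

theorem continuousOn_exp_neg_integral (hh : IntervalIntegrable h volume a b) :
    ContinuousOn (fun x ↦ Real.exp (-∫ s in x..b, h s)) (uIcc a b) := by
  refine (continuousOn_primitive_interval' hh right_mem_uIcc).rexp.congr fun x _ ↦ ?_
  simp only [integral_symm b x, neg_neg]

theorem hasDerivAt_exp_neg_integral {r : ℝ} (hh : IntervalIntegrable h volume r b)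
    (hmeas : StronglyMeasurableAtFilter h (𝓝 r)) (hcont : ContinuousAt h r) :
    HasDerivAt (fun x ↦ Real.exp (-∫ s in x..b, h s)) (Real.exp (-∫ s in r..b, h s) * h r) r := by
  simpa using (integral_hasDerivAt_left hh hmeas hcont).neg.exp

variable (hab : a ≤ b) (hh : IntervalIntegrable h volume a b)
  (hg : EqOn g (fun x ↦ Real.exp (-∫ s in x..b, h s)) (Icc a b))
include hab hh hg

theorem continuousOn_of_eqOn_exp_neg_integral : ContinuousOn g (Icc a b) :=
  (uIcc_of_le hab ▸ continuousOn_exp_neg_integral hh).congr hg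

theorem hasDerivAt_of_eqOn_exp_neg_integral (hcont : ContinuousOn h (Ioo a b)) {r : ℝ}
    (hr : r ∈ Ioo a b) : HasDerivAt g (g r * h r) r := by
  have hrb : IntervalIntegrable h volume r b := hh.mono_set (by
    rw [uIcc_of_le hab, uIcc_of_le hr.2.le]; exact Icc_subset_Icc_left hr.1.le)
  rw [hg (Ioo_subset_Icc_self hr)]
  exact (hasDerivAt_exp_neg_integral hrb (hcont.stronglyMeasurableAtFilter isOpen_Ioo r hr)
    (hcont.continuousAt (Ioo_mem_nhds hr.1 hr.2))).congr_of_eventuallyEq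
      (eventually_of_mem (Icc_mem_nhds hr.1 hr.2) hg)

theorem monotoneOn_of_eqOn_exp_neg_integral (hcont : ContinuousOn h (Ioo a b))
    (hh0 : ∀ s ∈ Ioo a b, 0 ≤ h s) : MonotoneOn g (Icc a b) := by
  refine monotoneOn_of_hasDerivWithinAt_nonneg (f' := fun r ↦ g r * h r) (convex_Icc a b)
    (continuousOn_of_eqOn_exp_neg_integral hab hh hg) (fun r hr ↦ ?_) (fun r hr ↦ ?_)
    <;> rw [interior_Icc] at hr
  · exact (hasDerivAt_of_eqOn_exp_neg_integral hab hh hg hcont hr).hasDerivWithinAt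
  · exact mul_nonneg (by rw [hg (Ioo_subset_Icc_self hr)]; positivity) (hh0 r hr)

theorem integral_mul_of_eqOn_exp_neg_integral (hcont : ContinuousOn h (Ioo a b)) :
    ∫ r in a..b, g r * h r = 1 - g a := by
  have hgb : g b = 1 := by simp [hg (right_mem_Icc.2 hab)]
  rw [integral_eq_sub_of_hasDerivAt_of_le hab (continuousOn_of_eqOn_exp_neg_integral hab hh hg)
    (fun r ↦ hasDerivAt_of_eqOn_exp_neg_integral hab hh hg hcont)
    (hh.continuousOn_mul (uIcc_of_le hab ▸ continuousOn_of_eqOn_exp_neg_integral hab hh hg)), hgb]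

end ExpNegIntegral

section Integrand

variable {u ut : ℝ → ℝ} {b : ℝ}

theorem continuousOn_one_div_mul_sq_sub (hu : ContinuousOn u (Icc 0 b))
    (hut : EqOn ut (radialAverage u) (Ioc 0 b)) :
    ContinuousOn (fun s ↦ 1 / s * (u s - ut s) ^ 2) (Ioc 0 b) :=
  (continuousOn_const.div continuousOn_id fun _ hs ↦ hs.1.ne').mul
    (((hu.mono Ioc_subset_Icc_self).sub
      ((continuousOn_radialAverage hu.integrableOn_Icc).congr hut)).pow 2)

theorem intervalIntegrable_one_div_mul_sq_sub {L : ℝ} (hb : 0 ≤ b) (hu : ContinuousOn u (Icc 0 b))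
    (hut : EqOn ut (radialAverage u) (Ioc 0 b)) (hbound : ∀ r ∈ Ioc 0 b, |u r - ut r| ≤ L * r) :
    IntervalIntegrable (fun s ↦ 1 / s * (u s - ut s) ^ 2) volume 0 b := by
  refine intervalIntegrable_of_continuousOn_Ioc_of_abs_le (M := L ^ 2 * b) hb
    (continuousOn_one_div_mul_sq_sub hu hut) fun s hs ↦ ?_
  rw [abs_of_nonneg (by positivity [hs.1])]
  exact (one_div_mul_sq_le hs.1 (hbound s hs)).trans (mul_le_mul_of_nonneg_left hs.2 (sq_nonneg L))

end Integrand

theorem stmt12_general (b L : ℝ) (hb : 0 < b)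
    (u ut g gt : ℝ → ℝ)
    (hu : ContinuousOn u (Set.Icc 0 b))
    (hut : ∀ r ∈ Set.Ioc 0 b, ut r = (1 / r) * ∫ s in (0:ℝ)..r, u s)
    (hbound : ∀ r ∈ Set.Ioc 0 b, |u r - ut r| ≤ L * r)
    (hg : ∀ r ∈ Set.Icc 0 b,
      g r = Real.exp (-(∫ s in r..b, (1 / s) * (u s - ut s) ^ 2)))
    (hgt : ∀ r ∈ Set.Ioc 0 b, gt r = (1 / r) * ∫ s in (0:ℝ)..r, g s) :
    ∫ r in (0:ℝ)..b, deriv gt r * ((u r) ^ 2 - 2 * u r * ut r) ≤ 1 - g 0 := by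
  have hh_int := intervalIntegrable_one_div_mul_sq_sub hb.le hu hut hbound
  have hh_cont := (continuousOn_one_div_mul_sq_sub hu hut).mono Ioo_subset_Ioc_self
  have hg_cont := continuousOn_of_eqOn_exp_neg_integral hb.le hh_int hg
  have hg_mono := monotoneOn_of_eqOn_exp_neg_integral hb.le hh_int hg hh_cont
    fun s hs ↦ mul_nonneg (one_div_nonneg.2 hs.1.le) (sq_nonneg _)
  have hg_le_one : g 0 ≤ 1 := by
    simpa [hg b (right_mem_Icc.2 hb.le)] using
      hg_mono (left_mem_Icc.2 hb.le) (right_mem_Icc.2 hb.le) hb.le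
  have hpointwise : ∀ r ∈ Ioo 0 b, deriv gt r * (u r ^ 2 - 2 * u r * ut r) ≤
      g r * (1 / r * (u r - ut r) ^ 2) := fun r hr ↦ by
    have hgt_eq : gt =ᶠ[𝓝 r] radialAverage g := eventually_of_mem (Ioc_mem_nhds hr.1 hr.2) hgt
    obtain ⟨hd0, hd1⟩ := hgt_eq.deriv_eq ▸ deriv_radialAverage_mem_Icc hg_cont hg_mono
      (by rw [hg 0 (left_mem_Icc.2 hb.le)]; positivity) hr
    calc _ ≤ g r / r * (u r - ut r) ^ 2 := mul_sq_sub_two_mul_le hd0 hd1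
      _ = _ := by ring
  -- Off the integrable case the left side is `0` by convention, and `g 0 ≤ g b = 1`.
  by_cases hint : IntervalIntegrable (fun r ↦ deriv gt r * (u r ^ 2 - 2 * u r * ut r)) volume 0 b
  · rw [← integral_mul_of_eqOn_exp_neg_integral hb.le hh_int hg hh_cont]
    exact integral_mono_on_of_le_Ioo hb.le hint
      (hh_int.continuousOn_mul (uIcc_of_le hb.le ▸ hg_cont)) hpointwise
  · rwa [integral_undef hint, sub_nonneg]

/-- Volume-term bound in the L²-stability proof (Theorem 3.1):
`∫_0^b g̃'(r) (u² - 2 u ũ) dr ≤ 1 - g(0)`, where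
`g(r) = exp(-∫_r^b (1/s)(u - ũ)² ds)` and `g̃` is the radial average of `g`. -/
theorem stmt12 (b L : ℝ) (hb : 0 < b) (hL : 0 ≤ L)
    (u ut g gt : ℝ → ℝ)
    (hu : ContinuousOn u (Set.Icc 0 b))
    (hut : ∀ r ∈ Set.Ioc 0 b, ut r = (1 / r) * ∫ s in (0:ℝ)..r, u s)
    (hbound : ∀ r ∈ Set.Ioc 0 b, |u r - ut r| ≤ L * r)
    (hg : ∀ r ∈ Set.Icc 0 b,
      g r = Real.exp (-(∫ s in r..b, (1 / s) * (u s - ut s) ^ 2)))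
    (hgt : ∀ r ∈ Set.Ioc 0 b, gt r = (1 / r) * ∫ s in (0:ℝ)..r, g s) :
    ∫ r in (0:ℝ)..b, deriv gt r * ((u r) ^ 2 - 2 * u r * ut r) ≤ 1 - g 0 :=
  stmt12_general b L hb u ut g gt hu hut hbound hg hgt
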